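/- Define readability without causal arbitration, A ⪯' B, by quantifying over arbitrary strict linear orders: for every finite labeled causal DAG (M, E, obj, sess) and every strict linear order ≺ on M (not required to refine E), every A-admissible cut w.r.t. (E, ≺) is B-admissible w.r.t. (E, ≺). Then ⪯' is exactly the product order: A ⪯' B if and only if O_A ≥ O_B in the chain trivial < object < all, and for every finite labeled causal DAG and every message m, deps_{C_B}(m) ⊆ deps_{C_A}(m). In particular, without causal arbitration the cross-axis κ-shortcuts vanish and all 12 configurations (C, O) are pairwise ⪯'-inequivalent. -/

import Mathlib

/-- Closure scopes. -/
inductive CScope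
  | none | object | session | explicit
deriving DecidableEq

/-- Ordering scopes. -/
inductive OScope
  | trivial | object | all
deriving DecidableEq

/-- A finite labeled causal DAG: a finite type of messages with an irreflexive
acyclic edge relation and object/session labels. -/
structure LDag where
  M : Type
  [fin : Fintype M]
  O0 : Type
  S0 : Type
  E : M → M → Prop
  irr : Irreflexive E
  acyc : Irreflexive (Relation.TransGen E)
  obj : M → O0
  sess : M → S0

/-- The closure filters `deps_C`. -/
def LDag.deps (G : LDag) : CScope → G.M → Set G.M
  | .none, _ => ∅
  | .object, m => {m' | G.E m' m ∧ G.obj m' = G.obj m}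
  | .session, m => {m' | G.E m' m ∧ G.sess m' = G.sess m}
  | .explicit, m => {m' | G.E m' m}

/-- Same-class relation of an ordering scope. -/
def LDag.sameClass (G : LDag) : OScope → G.M → G.M → Prop
  | .trivial, a, b => a = b
  | .object, a, b => G.obj a = G.obj b
  | .all, _, _ => True

/-- `V` is closed under the filter `deps_C`. -/
def LDag.closedUnder (G : LDag) (C : CScope) (V : Set G.M) : Prop :=
  ∀ m ∈ V, G.deps C m ⊆ V

/-- `V` is a per-class prefix for the ordering scope `O` w.r.t. `prec`. -/
def LDag.isPrefix (G : LDag) (O : OScope) (prec : G.M → G.M → Prop) (V : Set G.M) : Prop :=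
  ∀ m ∈ V, ∀ m', G.sameClass O m' m → prec m' m → m' ∈ V

/-- A cut `V` is admissible under the configuration `(C, O)` w.r.t. `(E, prec)`. -/
def LDag.admissible (G : LDag) (prec : G.M → G.M → Prop) (C : CScope) (O : OScope)
    (V : Set G.M) : Prop :=
  G.closedUnder C V ∧ G.isPrefix O prec V

/-- `prec` refines the causal order (causal arbitration). -/
def LDag.refines (G : LDag) (prec : G.M → G.M → Prop) : Prop :=
  ∀ m' m, G.E m' m → prec m' m

/-- A configuration is a pair of a closure scope and an ordering scope. -/
abbrev Config := CScope × OScope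

/-- Readability under causal arbitration: every `A`-admissible cut is
`B`-admissible, on every finite labeled causal DAG and every strict linear
order refining the causal edges. -/
def Readable (A B : Config) : Prop :=
  ∀ G : LDag, ∀ prec : G.M → G.M → Prop,
    IsStrictTotalOrder G.M prec → G.refines prec →
    ∀ V : Set G.M, G.admissible prec A.1 A.2 V → G.admissible prec B.1 B.2 V

/-- The chain `trivial < object < all` on ordering scopes, as a rank. -/
def OScope.rank : OScope → ℕ
  | .trivial => 0
  | .object => 1
  | .all => 2

/-- The κ map: the closure entailed by an ordering scope. -/
def kappa : OScope → CScope
  | .trivial => .none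
  | .object => .object
  | .all => .explicit

/-- Readability *without* causal arbitration: quantify over arbitrary strict
linear orders on the messages, not required to refine the causal edges. -/
def Readable' (A B : Config) : Prop :=
  ∀ G : LDag, ∀ prec : G.M → G.M → Prop,
    IsStrictTotalOrder G.M prec →
    ∀ V : Set G.M, G.admissible prec A.1 A.2 V → G.admissible prec B.1 B.2 V

/-!
Each closure filter keeps an edge `x → m` according to whether `x, m` share an object and a
session, and each ordering scope groups two distinct messages according to whether they share
an object; `deps`-inclusion and the rank order are exactly pointwise implication of these
tests. Implication of the tests gives readability directly. Conversely, a failure of either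
implication is witnessed on a two-message DAG with the cut `{true}`: with an edge
`false → true` and the order `true ≺ false` only the closure condition can fail, and with no
edge and the order `false ≺ true` only the prefix condition can fail. Since an arbitrary order
may run against the edge, the two axes decouple.
-/

def CScope.keeps : CScope → Prop → Prop → Prop
  | .none, _, _ => False
  | .object, sameObj, _ => sameObj
  | .session, _, sameSess => sameSess
  | .explicit, _, _ => True

def OScope.groups : OScope → Prop → Prop
  | .trivial, _ => False
  | .object, sameObj => sameObj
  | .all, _ => True

theorem CScope.ext_keeps {a b : CScope} (h : ∀ p q, a.keeps p q ↔ b.keeps p q) : a = b := by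
  have h₁ := h True True
  have h₂ := h False True
  have h₃ := h True False
  cases a <;> cases b <;> simp [CScope.keeps] at h₁ h₂ h₃ ⊢

theorem OScope.rank_le_iff {O O' : OScope} :
    O.rank ≤ O'.rank ↔ ∀ p, O.groups p → O'.groups p := by
  refine ⟨fun h p => ?_, fun h => ?_⟩
  · cases O <;> cases O' <;> simp_all [OScope.rank, OScope.groups]
  · have h₁ := h True
    have h₂ := h False
    cases O <;> cases O' <;> simp [OScope.rank, OScope.groups] at h₁ h₂ ⊢

theorem OScope.rank_injective : Function.Injective OScope.rank := by
  intro a b h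
  cases a <;> cases b <;> simp_all [OScope.rank]

namespace LDag

variable (G : LDag)

theorem mem_deps_iff {C : CScope} {x m : G.M} :
    x ∈ G.deps C m ↔ G.E x m ∧ C.keeps (G.obj x = G.obj m) (G.sess x = G.sess m) := by
  cases C <;> simp [deps, CScope.keeps]

theorem sameClass_iff {O : OScope} {a b : G.M} :
    G.sameClass O a b ↔ a = b ∨ O.groups (G.obj a = G.obj b) := by
  cases O <;> simp [sameClass, OScope.groups, or_iff_right_of_imp (congrArg G.obj)]

variable {G}

theorem closedUnder.mono {C C' : CScope} {V : Set G.M} (hV : G.closedUnder C V)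
    (h : ∀ m, G.deps C' m ⊆ G.deps C m) : G.closedUnder C' V :=
  fun m hm => (h m).trans (hV m hm)

theorem isPrefix.mono {O O' : OScope} {prec : G.M → G.M → Prop} {V : Set G.M}
    (hV : G.isPrefix O prec V) (h : O'.rank ≤ O.rank) : G.isPrefix O' prec V := by
  intro m hm m' hm' hprec
  refine hV m hm m' ((G.sameClass_iff).2 ?_) hprec
  exact ((G.sameClass_iff).1 hm').imp_right (OScope.rank_le_iff.1 h _)

end LDag

/-- The messages `false, true` carry objects `p, True` and sessions `q, True`, so that they
share an object iff `p` and a session iff `q`. -/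
abbrev twoPoint (e p q : Prop) : LDag where
  M := Bool
  O0 := Prop
  S0 := Prop
  E a b := e ∧ a < b
  irr a h := lt_irrefl a h.2
  acyc a ha := lt_irrefl a <| by
    simpa [Relation.transGen_eq_self] using Relation.TransGen.mono (fun _ _ h => h.2) a a ha
  obj b := cond b True p
  sess b := cond b True q

theorem twoPoint_mem_deps_iff {e p q : Prop} {C : CScope} :
    false ∈ (twoPoint e p q).deps C true ↔ e ∧ C.keeps p q :=
  (LDag.mem_deps_iff _).trans (by simp [twoPoint])

theorem twoPoint_sameClass_iff {e p q : Prop} {O : OScope} :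
    (twoPoint e p q).sameClass O false true ↔ O.groups p :=
  (LDag.sameClass_iff _).trans (by simp [twoPoint])

theorem forall_deps_subset_iff {C C' : CScope} :
    (∀ G : LDag, ∀ m : G.M, G.deps C' m ⊆ G.deps C m) ↔
      ∀ p q, C'.keeps p q → C.keeps p q := by
  refine ⟨fun h p q hC' => ?_, fun h G m x hx => ?_⟩
  · have hedge := twoPoint_mem_deps_iff.2 ⟨trivial, hC'⟩
    exact (twoPoint_mem_deps_iff.1 (h (twoPoint True p q) true hedge)).2
  · rw [LDag.mem_deps_iff] at hx ⊢
    exact hx.imp_right (h _ _)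

theorem readable'_of_le {A B : Config} (hO : B.2.rank ≤ A.2.rank)
    (hC : ∀ G : LDag, ∀ m : G.M, G.deps B.1 m ⊆ G.deps A.1 m) : Readable' A B :=
  fun G _ _ _ hV => ⟨hV.1.mono (hC G), hV.2.mono hO⟩

/-- The order `true ≺ false` runs against the edge `false → true`, so `{true}` is a prefix
under every ordering scope. -/
theorem Readable'.keeps_imp {A B : Config} (h : Readable' A B) {p q : Prop}
    (hB : B.1.keeps p q) : A.1.keeps p q := by
  by_contra hA
  have hV : (twoPoint True p q).admissible (· > ·) A.1 A.2 {true} := by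
    refine ⟨?_, ?_⟩
    · rintro m rfl x hx
      cases x
      · exact absurd (twoPoint_mem_deps_iff.1 hx).2 hA
      · rfl
    · rintro m rfl m' - hm'
      exact absurd hm' (Bool.le_true m').not_gt
  have hfalse := (h _ _ inferInstance _ hV).1 true rfl (twoPoint_mem_deps_iff.2 ⟨trivial, hB⟩)
  simp at hfalse

theorem Readable'.groups_imp {A B : Config} (h : Readable' A B) {p : Prop}
    (hB : B.2.groups p) : A.2.groups p := by
  by_contra hA
  have hV : (twoPoint False p True).admissible (· < ·) A.1 A.2 {true} := by
    refine ⟨fun m _ x hx => ((LDag.mem_deps_iff _).1 hx).1.1.elim, ?_⟩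
    rintro m rfl m' hm' hlt
    cases m'
    · exact absurd (twoPoint_sameClass_iff.1 hm') hA
    · rfl
  have hfalse := (h _ _ inferInstance _ hV).2 true rfl false (twoPoint_sameClass_iff.2 hB)
    Bool.false_lt_true
  simp at hfalse

/-- **Factoring without causal arbitration.** Without causal
arbitration, readability is exactly the product order, and all 12
configurations are pairwise inequivalent. -/
theorem readability_without_arbitration_factors :
    (∀ A B : Config,
      Readable' A B ↔
        (B.2.rank ≤ A.2.rank ∧
          ∀ G : LDag, ∀ m : G.M, G.deps B.1 m ⊆ G.deps A.1 m)) ∧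
    (∀ A B : Config, Readable' A B → Readable' B A → A = B) := by
  have factors (A B : Config) : Readable' A B ↔
      (B.2.rank ≤ A.2.rank ∧ ∀ G : LDag, ∀ m : G.M, G.deps B.1 m ⊆ G.deps A.1 m) :=
    ⟨fun h => ⟨OScope.rank_le_iff.2 fun _ => h.groups_imp,
        forall_deps_subset_iff.2 fun _ _ => h.keeps_imp⟩,
      fun h => readable'_of_le h.1 h.2⟩
  refine ⟨factors, fun A B hAB hBA => ?_⟩
  rw [factors, forall_deps_subset_iff] at hAB hBA
  exact Prod.ext (CScope.ext_keeps fun p q => ⟨hBA.2 p q, hAB.2 p q⟩)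
    (OScope.rank_injective (le_antisymm hBA.1 hAB.1))
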